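/- arXiv:2605.23017 — 3 statements merged into one kernel-verified Lean document; each statement's English description precedes it below -/
import Mathlib

section
/- Let n ≥ 1, let (Ω, μ) be a probability space, let K, C, D, ε ≥ 0 and δ_min > 0, let Γ : EuclideanSpace ℝ (Fin n) → ℝ satisfy |Γ(p) − Γ(q)| ≤ K·‖p − q‖ for all p, q ∈ Δⁿ, let R be a type with decidable equality, let γ : EuclideanSpace ℝ (Fin n) → R, let ψ : ℝ → R, let f : Ω → EuclideanSpace ℝ (Fin n) be measurable with values in Δⁿ, and let Q₁, Q₂ : Ω → EuclideanSpace ℝ (Fin n) be measurable with values in Δⁿ. Assume (i) ∫ ‖f(ω) − Q₁(ω)‖ dμ(ω) ≤ ε; (ii) ‖Q₂(ω) − Q₁(ω)‖ ≤ C·D for all ω; (iii) for every ω and every u in the range of Γ∘f, |Γ(Q₂(ω)) − u| ≤ δ_min implies γ(Q₂(ω)) = ψ(u); and (iv) the sets {ω | γ(Q₂(ω)) ≠ ψ(Γ(f(ω)))} and {ω | |Γ(Q₂(ω)) − Γ(f(ω))| ≥ δ_min} are measurable. Then μ {ω | γ(Q₂(ω)) ≠ ψ(Γ(f(ω)))}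 ≤ (K·ε + K·C·D)/δ_min. -/
open MeasureTheory

lemma simplex_norm_le {n : ℕ} {p : EuclideanSpace ℝ (Fin n)}
    (hp : WithLp.ofLp p ∈ stdSimplex ℝ (Fin n)) : ‖p‖ ≤ 1 := by
  rw [EuclideanSpace.norm_eq]
  have h1 : ∑ i, ‖p i‖ ^ 2 ≤ 1 := by
    calc ∑ i, ‖p i‖ ^ 2 ≤ ∑ i, p i := by
          refine Finset.sum_le_sum fun i _ => ?_
          rw [Real.norm_eq_abs, abs_of_nonneg (hp.1 i), sq]
          have h1 : p i ≤ 1 :=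
            hp.2 ▸ Finset.single_le_sum (fun j _ => hp.1 j) (Finset.mem_univ i)
          exact mul_le_of_le_one_left (hp.1 i) h1
      _ = 1 := hp.2
  calc Real.sqrt (∑ i, ‖p i‖ ^ 2) ≤ Real.sqrt 1 := Real.sqrt_le_sqrt h1
    _ = 1 := Real.sqrt_one

lemma coord_le_l2 {n : ℕ} (x : EuclideanSpace ℝ (Fin n)) (i : Fin n) :
    |x i| ≤ ‖x‖ := by
  rw [EuclideanSpace.norm_eq]
  rw [show |x i| = Real.sqrt (|x i| ^ 2) by rw [Real.sqrt_sq (abs_nonneg _)]]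
  apply Real.sqrt_le_sqrt
  have := Finset.single_le_sum (f := fun j => ‖x j‖ ^ 2)
    (fun j _ => by positivity) (Finset.mem_univ i)
  simpa [Real.norm_eq_abs] using this

lemma sup_norm_le_l2 {n : ℕ} (x : EuclideanSpace ℝ (Fin n)) :
    @norm (Fin n → ℝ) (NormedRing.toNorm) x ≤ ‖x‖ := by
  have h : ∀ i, ‖x i‖ ≤ ‖x‖ := fun i => by
    simpa [Real.norm_eq_abs] using coord_le_l2 x i
  exact pi_norm_le_iff_of_nonneg (norm_nonneg x) |>.mpr h

theorem stmt7 {n : ℕ} (hn : 1 ≤ n) {Ω : Type*} [MeasurableSpace Ω]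
    (μ : Measure Ω) [IsProbabilityMeasure μ]
    (K C D ε δmin : ℝ) (hK : 0 ≤ K) (hC : 0 ≤ C) (hD : 0 ≤ D) (hε : 0 ≤ ε)
    (hδmin : 0 < δmin)
    (Γ : EuclideanSpace ℝ (Fin n) → ℝ)
    (hΓ : ∀ p ∈ stdSimplex ℝ (Fin n), ∀ q ∈ stdSimplex ℝ (Fin n),
      |Γ (WithLp.toLp 2 p) - Γ (WithLp.toLp 2 q)| ≤ K * ‖p - q‖)
    {R : Type*} [DecidableEq R]
    (γ : EuclideanSpace ℝ (Fin n) → R) (ψ : ℝ → R)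
    (f : Ω → EuclideanSpace ℝ (Fin n)) (hf : Measurable f)
    (hfs : ∀ ω, WithLp.ofLp (f ω) ∈ stdSimplex ℝ (Fin n))
    (Q₁ Q₂ : Ω → EuclideanSpace ℝ (Fin n))
    (hQ₁ : Measurable Q₁) (hQ₂ : Measurable Q₂)
    (hQ₁s : ∀ ω, WithLp.ofLp (Q₁ ω) ∈ stdSimplex ℝ (Fin n))
    (hQ₂s : ∀ ω, WithLp.ofLp (Q₂ ω) ∈ stdSimplex ℝ (Fin n))
    (hcal : ∫ ω, ‖f ω - Q₁ ω‖ ∂μ ≤ ε)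
    (hclose : ∀ ω, ‖Q₂ ω - Q₁ ω‖ ≤ C * D)
    (hlink : ∀ ω, ∀ u ∈ Set.range (fun ω' => Γ (f ω')),
      |Γ (Q₂ ω) - u| ≤ δmin → γ (Q₂ ω) = ψ u)
    (hm₁ : MeasurableSet {ω | γ (Q₂ ω) ≠ ψ (Γ (f ω))})
    (hm₂ : MeasurableSet {ω | |Γ (Q₂ ω) - Γ (f ω)| ≥ δmin}) :
    μ {ω | γ (Q₂ ω) ≠ ψ (Γ (f ω))} ≤
      ENNReal.ofReal ((K * ε + K * C * D) / δmin) := by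
  set g : Ω → ℝ := fun ω => K * ‖f ω - Q₁ ω‖ + K * C * D with hg
  have hgbound : ∀ ω, |Γ (Q₂ ω) - Γ (f ω)| ≤ g ω := by
    intro ω
    refine (hΓ _ (hQ₂s ω) _ (hfs ω)).trans ?_
    have h1 := sup_norm_le_l2 (Q₂ ω - f ω)
    refine le_trans (mul_le_mul_of_nonneg_left h1 hK) ?_
    calc K * ‖Q₂ ω - f ω‖
        ≤ K * (‖Q₂ ω - Q₁ ω‖ + ‖Q₁ ω - f ω‖) := by
          apply mul_le_mul_of_nonneg_left _ hK
          simpa using norm_sub_le_norm_sub_add_norm_sub (Q₂ ω) (Q₁ ω) (f ω)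
      _ ≤ K * (C * D + ‖f ω - Q₁ ω‖) := by
          apply mul_le_mul_of_nonneg_left _ hK
          rw [norm_sub_rev (Q₁ ω)]
          exact add_le_add_left (hclose ω) _
      _ = g ω := by ring
  have hsub : {ω | γ (Q₂ ω) ≠ ψ (Γ (f ω))} ⊆ {ω | δmin ≤ g ω} := by
    intro ω hω
    by_contra h
    simp only [Set.mem_setOf_eq, not_le] at h
    exact hω (hlink ω (Γ (f ω)) ⟨ω, rfl⟩ ((hgbound ω).trans h.le))
  have hgnonneg : ∀ ω, 0 ≤ g ω := fun ω =>
    add_nonneg (mul_nonneg hK (norm_nonneg _)) (mul_nonneg (mul_nonneg hK hC) hD)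
  have hnint : Integrable (fun ω => ‖f ω - Q₁ ω‖) μ := by
    refine Integrable.mono' (integrable_const 2) ((hf.sub hQ₁).norm).aestronglyMeasurable
      (Filter.Eventually.of_forall fun ω => ?_)
    rw [Real.norm_eq_abs, abs_of_nonneg (norm_nonneg _)]
    calc ‖f ω - Q₁ ω‖ ≤ ‖f ω‖ + ‖Q₁ ω‖ := norm_sub_le _ _
      _ ≤ 1 + 1 := add_le_add (simplex_norm_le (hfs ω)) (simplex_norm_le (hQ₁s ω))
      _ = 2 := by norm_num
  have hgint : Integrable g μ := (hnint.const_mul K).add (integrable_const _)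
  have hintg : ∫ ω, g ω ∂μ ≤ K * ε + K * C * D := by
    rw [hg]
    rw [integral_add (hnint.const_mul K) (integrable_const _), integral_const_mul,
      integral_const]
    simp only [measure_univ, probReal_univ, ENNReal.toReal_one, smul_eq_mul, one_mul]
    exact add_le_add_left (mul_le_mul_of_nonneg_left hcal hK) _
  have hmarkov := mul_meas_ge_le_integral_of_nonneg
    (Filter.Eventually.of_forall hgnonneg) hgint δmin
  calc μ {ω | γ (Q₂ ω) ≠ ψ (Γ (f ω))} ≤ μ {ω | δmin ≤ g ω} := measure_mono hsub
    _ = ENNReal.ofReal (μ {ω | δmin ≤ g ω}).toReal :=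
        (ENNReal.ofReal_toReal (measure_ne_top μ _)).symm
    _ ≤ ENNReal.ofReal ((K * ε + K * C * D) / δmin) := by
        apply ENNReal.ofReal_le_ofReal
        rw [le_div_iff₀ hδmin]
        calc (μ {ω | δmin ≤ g ω}).toReal * δmin
            = δmin * (μ {ω | δmin ≤ g ω}).toReal := mul_comm _ _
          _ ≤ ∫ ω, g ω ∂μ := hmarkov
          _ ≤ K * ε + K * C * D := hintg
end

section
/- Let o₁ := (−1, 3, 2) and o₂ := (−2, −1, 3) in ℝ³, and define Γ : Δ³ → ℝ by Γ(p) := ⟨o₁, p⟩ if ⟨o₁, p⟩ ≤ 0; Γ(p) := ⟨o₁, p⟩/⟨o₁ − o₂, p⟩ if ⟨o₁, p⟩ > 0 and ⟨o₂, p⟩ ≤ 0; and Γ(p) := ⟨o₂, p⟩ + 1 if ⟨o₂, p⟩ > 0. Then Γ is Lipschitz on Δ³: there exists K ≥ 0 such that |Γ(p) − Γ(q)| ≤ K·‖p − q‖ for all p, q ∈ Δ³ (Euclidean norm). -/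
open RealInnerProductSpace

set_option maxHeartbeats 1000000 in
theorem stmt12
    (o₁ o₂ : EuclideanSpace ℝ (Fin 3))
    (ho₁ : o₁ = ![(-1 : ℝ), 3, 2]) (ho₂ : o₂ = ![(-2 : ℝ), -1, 3])
    (Γ : EuclideanSpace ℝ (Fin 3) → ℝ)
    (hΓ₁ : ∀ q ∈ stdSimplex ℝ (Fin 3), ⟪o₁, WithLp.toLp 2 q⟫ ≤ 0 → Γ (WithLp.toLp 2 q) = ⟪o₁, WithLp.toLp 2 q⟫)
    (hΓ₂ : ∀ q ∈ stdSimplex ℝ (Fin 3), 0 < ⟪o₁, WithLp.toLp 2 q⟫ → ⟪o₂, WithLp.toLp 2 q⟫ ≤ 0 →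
      Γ (WithLp.toLp 2 q) = ⟪o₁, WithLp.toLp 2 q⟫ / ⟪o₁ - o₂, WithLp.toLp 2 q⟫)
    (hΓ₃ : ∀ q ∈ stdSimplex ℝ (Fin 3), 0 < ⟪o₂, WithLp.toLp 2 q⟫ → Γ (WithLp.toLp 2 q) = ⟪o₂, WithLp.toLp 2 q⟫ + 1) :
    ∃ K : ℝ, 0 ≤ K ∧ ∀ p ∈ stdSimplex ℝ (Fin 3), ∀ q ∈ stdSimplex ℝ (Fin 3),
      |Γ (WithLp.toLp 2 p) - Γ (WithLp.toLp 2 q)| ≤ K * ‖p - q‖ := by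
  refine ⟨90, by norm_num, ?_⟩
  replace hΓ₁ : ∀ q : EuclideanSpace ℝ (Fin 3), q.ofLp ∈ stdSimplex ℝ (Fin 3) → ⟪o₁, q⟫ ≤ 0 → Γ q = ⟪o₁, q⟫ :=
    fun q hq => hΓ₁ q.ofLp hq
  replace hΓ₂ : ∀ q : EuclideanSpace ℝ (Fin 3), q.ofLp ∈ stdSimplex ℝ (Fin 3) → 0 < ⟪o₁, q⟫ → ⟪o₂, q⟫ ≤ 0 →
      Γ q = ⟪o₁, q⟫ / ⟪o₁ - o₂, q⟫ :=
    fun q hq => hΓ₂ q.ofLp hq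
  replace hΓ₃ : ∀ q : EuclideanSpace ℝ (Fin 3), q.ofLp ∈ stdSimplex ℝ (Fin 3) → 0 < ⟪o₂, q⟫ → Γ q = ⟪o₂, q⟫ + 1 :=
    fun q hq => hΓ₃ q.ofLp hq
  -- coordinate values of the inner products
  have ha3 : ∀ s : EuclideanSpace ℝ (Fin 3), ⟪o₁, s⟫ = -s 0 + 3 * s 1 + 2 * s 2 := by
    intro s
    simp [PiLp.inner_apply, Fin.sum_univ_three, RCLike.inner_apply, ho₁]
    ring
  have hb3 : ∀ s : EuclideanSpace ℝ (Fin 3), ⟪o₂, s⟫ = -2 * s 0 - s 1 + 3 * s 2 := by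
    intro s
    simp [PiLp.inner_apply, Fin.sum_univ_three, RCLike.inner_apply, ho₂]
    ring
  -- generic Cauchy-Schwarz style bound
  have ibnd : ∀ (o : EuclideanSpace ℝ (Fin 3)) (c : ℝ), 0 ≤ c → ⟪o, o⟫ ≤ c ^ 2 →
      ∀ u : EuclideanSpace ℝ (Fin 3), |⟪o, u⟫| ≤ c * ‖u‖ := by
    intro o c hc hoc u
    have h1 : |⟪o, u⟫| ≤ ‖o‖ * ‖u‖ := abs_real_inner_le_norm o u
    have h2 : ‖o‖ ≤ c := by
      nlinarith [norm_nonneg o, real_inner_self_eq_norm_sq o]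
    calc |⟪o, u⟫| ≤ ‖o‖ * ‖u‖ := h1
      _ ≤ c * ‖u‖ := mul_le_mul_of_nonneg_right h2 (norm_nonneg u)
  have hbnd1 : ∀ u : EuclideanSpace ℝ (Fin 3), |⟪o₁, u⟫| ≤ 4 * ‖u‖ := by
    refine ibnd o₁ 4 (by norm_num) ?_
    rw [ha3]
    simp [ho₁]
    norm_num
  have hbnd2 : ∀ u : EuclideanSpace ℝ (Fin 3), |⟪o₂, u⟫| ≤ 4 * ‖u‖ := by
    refine ibnd o₂ 4 (by norm_num) ?_
    rw [hb3]
    simp [ho₂]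
    norm_num
  have hbnd12 : ∀ u : EuclideanSpace ℝ (Fin 3), |⟪o₁ - o₂, u⟫| ≤ 5 * ‖u‖ := by
    refine ibnd (o₁ - o₂) 5 (by norm_num) ?_
    rw [inner_sub_left, inner_sub_right, inner_sub_right, ha3, ha3, hb3, hb3]
    simp [ho₁, ho₂]
    norm_num
  -- simplex coordinate facts
  have hsimp : ∀ s : EuclideanSpace ℝ (Fin 3), s.ofLp ∈ stdSimplex ℝ (Fin 3) →
      0 ≤ s 0 ∧ 0 ≤ s 1 ∧ 0 ≤ s 2 ∧ s 0 + s 1 + s 2 = 1 := by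
    intro s hs
    refine ⟨hs.1 0, hs.1 1, hs.1 2, ?_⟩
    have := hs.2
    rwa [Fin.sum_univ_three] at this
  -- denominator lower bound
  have hden : ∀ s : EuclideanSpace ℝ (Fin 3), s.ofLp ∈ stdSimplex ℝ (Fin 3) → ⟪o₂, s⟫ ≤ 0 →
      1/5 ≤ ⟪o₁, s⟫ - ⟪o₂, s⟫ := by
    intro s hs hb
    obtain ⟨h0, h1, h2, hsum⟩ := hsimp s hs
    rw [ha3, hb3]
    rw [hb3] at hb
    linarith
  -- o₁ and o₂ have no common zero on the simplex
  have hnozero : ∀ s : EuclideanSpace ℝ (Fin 3), s.ofLp ∈ stdSimplex ℝ (Fin 3) → ⟪o₁, s⟫ = 0 → ⟪o₂, s⟫ = 0 → False := by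
    intro s hs hA hB
    obtain ⟨h0, h1, h2, hsum⟩ := hsimp s hs
    rw [ha3] at hA
    rw [hb3] at hB
    linarith
  -- region exclusion
  have hexcl : ∀ s : EuclideanSpace ℝ (Fin 3), s.ofLp ∈ stdSimplex ℝ (Fin 3) → 0 < ⟪o₂, s⟫ → 0 < ⟪o₁, s⟫ := by
    intro s hs hb
    by_contra h
    push_neg at h
    have e1 := hΓ₁ s hs h
    have e2 := hΓ₃ s hs hb
    rw [e1] at e2
    linarith
  -- value of Γ on the closed middle region
  have hval2 : ∀ s : EuclideanSpace ℝ (Fin 3), s.ofLp ∈ stdSimplex ℝ (Fin 3) → 0 ≤ ⟪o₁, s⟫ → ⟪o₂, s⟫ ≤ 0 →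
      Γ s = ⟪o₁, s⟫ / (⟪o₁, s⟫ - ⟪o₂, s⟫) := by
    intro s hs ha hb
    rcases ha.lt_or_eq with h | h
    · rw [hΓ₂ s hs h hb, inner_sub_left]
    · rw [hΓ₁ s hs h.ge, ← h, zero_div]
  -- value of Γ on the closed upper region (with positive first inner)
  have hval3 : ∀ s : EuclideanSpace ℝ (Fin 3), s.ofLp ∈ stdSimplex ℝ (Fin 3) → 0 < ⟪o₁, s⟫ → 0 ≤ ⟪o₂, s⟫ →
      Γ s = ⟪o₂, s⟫ + 1 := by
    intro s hs ha hb
    rcases hb.lt_or_eq with h | h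
    · exact hΓ₃ s hs h
    · have h2 := hΓ₂ s hs ha h.ge
      rw [inner_sub_left, ← h, sub_zero, div_self ha.ne'] at h2
      rw [h2, ← h]
      norm_num
  -- Lipschitz bound for the ratio on the closed middle region
  have hratio1 : ∀ s : EuclideanSpace ℝ (Fin 3), s.ofLp ∈ stdSimplex ℝ (Fin 3) → ∀ t : EuclideanSpace ℝ (Fin 3), t.ofLp ∈ stdSimplex ℝ (Fin 3) →
      0 ≤ ⟪o₁, s⟫ → ⟪o₂, s⟫ ≤ 0 → 0 ≤ ⟪o₁, t⟫ → ⟪o₂, t⟫ ≤ 0 →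
      ⟪o₁, s⟫ / (⟪o₁, s⟫ - ⟪o₂, s⟫) - ⟪o₁, t⟫ / (⟪o₁, t⟫ - ⟪o₂, t⟫) ≤ 45 * ‖s - t‖ := by
    intro s hs t ht has hbs hat hbt
    have hds : 1/5 ≤ ⟪o₁, s⟫ - ⟪o₂, s⟫ := hden s hs hbs
    have hdt : 1/5 ≤ ⟪o₁, t⟫ - ⟪o₂, t⟫ := hden t ht hbt
    have hds0 : (0:ℝ) < ⟪o₁, s⟫ - ⟪o₂, s⟫ := by linarith
    have hdt0 : (0:ℝ) < ⟪o₁, t⟫ - ⟪o₂, t⟫ := by linarith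
    have h1 : ⟪o₁, s⟫ - ⟪o₁, t⟫ ≤ 4 * ‖s - t‖ := by
      have := hbnd1 (s - t)
      rw [inner_sub_right] at this
      exact (abs_le.mp this).2
    have h2 : (⟪o₁, t⟫ - ⟪o₂, t⟫) - (⟪o₁, s⟫ - ⟪o₂, s⟫) ≤ 5 * ‖s - t‖ := by
      have := hbnd12 (t - s)
      rw [inner_sub_right, inner_sub_left, inner_sub_left, norm_sub_rev] at this
      have h' := (abs_le.mp this).2
      linarith
    rw [div_sub_div _ _ hds0.ne' hdt0.ne', div_le_iff₀ (mul_pos hds0 hdt0)]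
    have hn : (0:ℝ) ≤ ‖s - t‖ := norm_nonneg _
    have hatdt : ⟪o₁, t⟫ ≤ ⟪o₁, t⟫ - ⟪o₂, t⟫ := by linarith
    nlinarith [mul_le_mul_of_nonneg_right h1 hdt0.le,
      mul_le_mul_of_nonneg_left h2 hat,
      mul_le_mul_of_nonneg_right hatdt (by positivity : (0:ℝ) ≤ 5 * ‖s - t‖),
      mul_nonneg (mul_nonneg hn hdt0.le) (by linarith : (0:ℝ) ≤ 45 * (⟪o₁, s⟫ - ⟪o₂, s⟫) - 9)]
  have hratio : ∀ s : EuclideanSpace ℝ (Fin 3), s.ofLp ∈ stdSimplex ℝ (Fin 3) → ∀ t : EuclideanSpace ℝ (Fin 3), t.ofLp ∈ stdSimplex ℝ (Fin 3) →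
      0 ≤ ⟪o₁, s⟫ → ⟪o₂, s⟫ ≤ 0 → 0 ≤ ⟪o₁, t⟫ → ⟪o₂, t⟫ ≤ 0 →
      |⟪o₁, s⟫ / (⟪o₁, s⟫ - ⟪o₂, s⟫) - ⟪o₁, t⟫ / (⟪o₁, t⟫ - ⟪o₂, t⟫)| ≤ 45 * ‖s - t‖ := by
    intro s hs t ht has hbs hat hbt
    rw [abs_sub_le_iff]
    refine ⟨hratio1 s hs t ht has hbs hat hbt, ?_⟩
    rw [norm_sub_rev]
    exact hratio1 t ht s hs hat hbt has hbs
  -- segment helpers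
  have hseg : ∀ x : EuclideanSpace ℝ (Fin 3), x.ofLp ∈ stdSimplex ℝ (Fin 3) → ∀ y : EuclideanSpace ℝ (Fin 3), y.ofLp ∈ stdSimplex ℝ (Fin 3) → ∀ t : ℝ,
      0 ≤ t → t ≤ 1 → ((1 - t) • x + t • y).ofLp ∈ stdSimplex ℝ (Fin 3) := by
    intro x hx y hy t ht0 ht1
    rw [WithLp.ofLp_add, WithLp.ofLp_smul, WithLp.ofLp_smul]
    exact convex_stdSimplex ℝ (Fin 3) hx hy (by linarith) ht0 (by ring)
  have hn1 : ∀ (x y : EuclideanSpace ℝ (Fin 3)) (t : ℝ), 0 ≤ t →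
      ‖x - ((1 - t) • x + t • y)‖ = t * ‖x - y‖ := by
    intro x y t ht
    have h : x - ((1 - t) • x + t • y) = t • (x - y) := by module
    rw [h, norm_smul, Real.norm_eq_abs, abs_of_nonneg ht]
  have hn2 : ∀ (x y : EuclideanSpace ℝ (Fin 3)) (t : ℝ), t ≤ 1 →
      ‖((1 - t) • x + t • y) - y‖ = (1 - t) * ‖x - y‖ := by
    intro x y t ht
    have h : ((1 - t) • x + t • y) - y = (1 - t) • (x - y) := by module
    rw [h, norm_smul, Real.norm_eq_abs, abs_of_nonneg (by linarith)]
  have aff : ∀ (o x y : EuclideanSpace ℝ (Fin 3)) (t : ℝ),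
      ⟪o, (1 - t) • x + t • y⟫ = (1 - t) * ⟪o, x⟫ + t * ⟪o, y⟫ := by
    intro o x y t
    rw [inner_add_right, real_inner_smul_right, real_inner_smul_right]
  -- crossing from region 1 to region 2
  have cross_a : ∀ p : EuclideanSpace ℝ (Fin 3), p.ofLp ∈ stdSimplex ℝ (Fin 3) → ∀ q : EuclideanSpace ℝ (Fin 3), q.ofLp ∈ stdSimplex ℝ (Fin 3) →
      ⟪o₁, p⟫ ≤ 0 → ⟪o₂, p⟫ ≤ 0 → 0 < ⟪o₁, q⟫ → ⟪o₂, q⟫ ≤ 0 →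
      |Γ p - Γ q| ≤ 45 * ‖p - q‖ := by
    intro p hp q hq hap hbp haq hbq
    set t := ⟪o₁, p⟫ / (⟪o₁, p⟫ - ⟪o₁, q⟫) with htdef
    have hd : ⟪o₁, p⟫ - ⟪o₁, q⟫ < 0 := by linarith
    have ht0 : 0 ≤ t := div_nonneg_iff.mpr (Or.inr ⟨hap, hd.le⟩)
    have ht1 : t ≤ 1 := by
      rw [htdef, div_le_one_iff]
      exact Or.inr (Or.inr ⟨hd, by linarith⟩)
    set r := (1 - t) • p + t • q with hrdef
    have hr : r.ofLp ∈ stdSimplex ℝ (Fin 3) := hseg p hp q hq t ht0 ht1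
    have har : ⟪o₁, r⟫ = 0 := by
      rw [hrdef, aff]
      have h1 : (1 - t) * ⟪o₁, p⟫ + t * ⟪o₁, q⟫
          = ⟪o₁, p⟫ - t * (⟪o₁, p⟫ - ⟪o₁, q⟫) := by ring
      rw [h1, htdef, div_mul_cancel₀ _ hd.ne, sub_self]
    have hbr : ⟪o₂, r⟫ ≤ 0 := by
      rw [hrdef, aff]
      nlinarith [mul_nonpos_of_nonneg_of_nonpos (by linarith : (0:ℝ) ≤ 1 - t) hbp,
        mul_nonpos_of_nonneg_of_nonpos ht0 hbq]
    have hΓp : Γ p = ⟪o₁, p⟫ := hΓ₁ p hp hap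
    have hΓr : Γ r = 0 := by
      have := hΓ₁ r hr har.le
      rw [this, har]
    have e1 : |Γ p - Γ r| ≤ 45 * ‖p - r‖ := by
      rw [hΓp, hΓr, sub_zero]
      have h' : ⟪o₁, p⟫ = ⟪o₁, p - r⟫ := by rw [inner_sub_right, har, sub_zero]
      rw [h']
      have := hbnd1 (p - r)
      nlinarith [norm_nonneg (p - r)]
    have e2 : |Γ r - Γ q| ≤ 45 * ‖r - q‖ := by
      rw [hval2 r hr har.ge hbr, hval2 q hq haq.le hbq]
      exact hratio r hr q hq har.ge hbr haq.le hbq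
    have n1 : ‖p - r‖ = t * ‖p - q‖ := hn1 p q t ht0
    have n2 : ‖r - q‖ = (1 - t) * ‖p - q‖ := hn2 p q t ht1
    rw [n1] at e1
    rw [n2] at e2
    calc |Γ p - Γ q| ≤ |Γ p - Γ r| + |Γ r - Γ q| := abs_sub_le _ _ _
      _ ≤ 45 * ‖p - q‖ := by nlinarith
  -- crossing from region 2 to region 3
  have cross_b : ∀ p : EuclideanSpace ℝ (Fin 3), p.ofLp ∈ stdSimplex ℝ (Fin 3) → ∀ q : EuclideanSpace ℝ (Fin 3), q.ofLp ∈ stdSimplex ℝ (Fin 3) →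
      0 < ⟪o₁, p⟫ → ⟪o₂, p⟫ ≤ 0 → 0 < ⟪o₂, q⟫ →
      |Γ p - Γ q| ≤ 45 * ‖p - q‖ := by
    intro p hp q hq hap hbp hbq
    have haq : 0 < ⟪o₁, q⟫ := hexcl q hq hbq
    set t := ⟪o₂, p⟫ / (⟪o₂, p⟫ - ⟪o₂, q⟫) with htdef
    have hd : ⟪o₂, p⟫ - ⟪o₂, q⟫ < 0 := by linarith
    have ht0 : 0 ≤ t := div_nonneg_iff.mpr (Or.inr ⟨hbp, hd.le⟩)
    have ht1 : t ≤ 1 := by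
      rw [htdef, div_le_one_iff]
      exact Or.inr (Or.inr ⟨hd, by linarith⟩)
    set r := (1 - t) • p + t • q with hrdef
    have hr : r.ofLp ∈ stdSimplex ℝ (Fin 3) := hseg p hp q hq t ht0 ht1
    have hbr : ⟪o₂, r⟫ = 0 := by
      rw [hrdef, aff]
      have h1 : (1 - t) * ⟪o₂, p⟫ + t * ⟪o₂, q⟫
          = ⟪o₂, p⟫ - t * (⟪o₂, p⟫ - ⟪o₂, q⟫) := by ring
      rw [h1, htdef, div_mul_cancel₀ _ hd.ne, sub_self]
    have har : 0 < ⟪o₁, r⟫ := by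
      rw [hrdef, aff]
      nlinarith [mul_pos hap haq, mul_nonneg ht0 haq.le,
        mul_nonneg (by linarith : (0:ℝ) ≤ 1 - t) hap.le,
        mul_nonneg (mul_nonneg ht0 haq.le) hap.le,
        mul_nonneg (mul_nonneg (by linarith : (0:ℝ) ≤ 1 - t) hap.le) haq.le]
    have e1 : |Γ p - Γ r| ≤ 45 * ‖p - r‖ := by
      rw [hval2 p hp hap.le hbp, hval2 r hr har.le hbr.le]
      exact hratio p hp r hr hap.le hbp har.le hbr.le
    have e2 : |Γ r - Γ q| ≤ 45 * ‖r - q‖ := by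
      rw [hval3 r hr har hbr.ge, hΓ₃ q hq hbq]
      have h' : ⟪o₂, r⟫ + 1 - (⟪o₂, q⟫ + 1) = ⟪o₂, r - q⟫ := by
        rw [inner_sub_right]; ring
      rw [h']
      have := hbnd2 (r - q)
      nlinarith [norm_nonneg (r - q)]
    have n1 : ‖p - r‖ = t * ‖p - q‖ := hn1 p q t ht0
    have n2 : ‖r - q‖ = (1 - t) * ‖p - q‖ := hn2 p q t ht1
    rw [n1] at e1
    rw [n2] at e2
    calc |Γ p - Γ q| ≤ |Γ p - Γ r| + |Γ r - Γ q| := abs_sub_le _ _ _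
      _ ≤ 45 * ‖p - q‖ := by nlinarith
  -- crossing from region 1 to region 3
  have cross_ab : ∀ p : EuclideanSpace ℝ (Fin 3), p.ofLp ∈ stdSimplex ℝ (Fin 3) → ∀ q : EuclideanSpace ℝ (Fin 3), q.ofLp ∈ stdSimplex ℝ (Fin 3) →
      ⟪o₁, p⟫ ≤ 0 → ⟪o₂, p⟫ ≤ 0 → 0 < ⟪o₂, q⟫ →
      |Γ p - Γ q| ≤ 45 * ‖p - q‖ := by
    intro p hp q hq hap hbp hbq
    have haq : 0 < ⟪o₁, q⟫ := hexcl q hq hbq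
    set t := ⟪o₁, p⟫ / (⟪o₁, p⟫ - ⟪o₁, q⟫) with htdef
    have hd : ⟪o₁, p⟫ - ⟪o₁, q⟫ < 0 := by linarith
    have ht0 : 0 ≤ t := div_nonneg_iff.mpr (Or.inr ⟨hap, hd.le⟩)
    have ht1 : t ≤ 1 := by
      rw [htdef, div_le_one_iff]
      exact Or.inr (Or.inr ⟨hd, by linarith⟩)
    set r := (1 - t) • p + t • q with hrdef
    have hr : r.ofLp ∈ stdSimplex ℝ (Fin 3) := hseg p hp q hq t ht0 ht1
    have har : ⟪o₁, r⟫ = 0 := by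
      rw [hrdef, aff]
      have h1 : (1 - t) * ⟪o₁, p⟫ + t * ⟪o₁, q⟫
          = ⟪o₁, p⟫ - t * (⟪o₁, p⟫ - ⟪o₁, q⟫) := by ring
      rw [h1, htdef, div_mul_cancel₀ _ hd.ne, sub_self]
    have hbr : ⟪o₂, r⟫ ≤ 0 := by
      by_contra h
      push_neg at h
      have := hexcl r hr h
      linarith [har]
    have hΓp : Γ p = ⟪o₁, p⟫ := hΓ₁ p hp hap
    have hΓr : Γ r = 0 := by
      have := hΓ₁ r hr har.le
      rw [this, har]
    have e1 : |Γ p - Γ r| ≤ 45 * ‖p - r‖ := by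
      rw [hΓp, hΓr, sub_zero]
      have h' : ⟪o₁, p⟫ = ⟪o₁, p - r⟫ := by rw [inner_sub_right, har, sub_zero]
      rw [h']
      have := hbnd1 (p - r)
      nlinarith [norm_nonneg (p - r)]
    -- second crossing, on the segment from r to q
    set u := ⟪o₂, r⟫ / (⟪o₂, r⟫ - ⟪o₂, q⟫) with hudef
    have hd2 : ⟪o₂, r⟫ - ⟪o₂, q⟫ < 0 := by linarith
    have hu0 : 0 ≤ u := div_nonneg_iff.mpr (Or.inr ⟨hbr, hd2.le⟩)
    have hu1 : u ≤ 1 := by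
      rw [hudef, div_le_one_iff]
      exact Or.inr (Or.inr ⟨hd2, by linarith⟩)
    set w := (1 - u) • r + u • q with hwdef
    have hw : w.ofLp ∈ stdSimplex ℝ (Fin 3) := hseg r hr q hq u hu0 hu1
    have hbw : ⟪o₂, w⟫ = 0 := by
      rw [hwdef, aff]
      have h1 : (1 - u) * ⟪o₂, r⟫ + u * ⟪o₂, q⟫
          = ⟪o₂, r⟫ - u * (⟪o₂, r⟫ - ⟪o₂, q⟫) := by ring
      rw [h1, hudef, div_mul_cancel₀ _ hd2.ne, sub_self]
    have haw0 : 0 ≤ ⟪o₁, w⟫ := by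
      rw [hwdef, aff, har]
      have := mul_nonneg hu0 haq.le
      linarith
    have haw : 0 < ⟪o₁, w⟫ := by
      rcases haw0.lt_or_eq with h | h
      · exact h
      · exact (hnozero w hw h.symm hbw).elim
    have e2 : |Γ r - Γ w| ≤ 45 * ‖r - w‖ := by
      rw [hval2 r hr har.ge hbr, hval2 w hw haw.le hbw.le]
      exact hratio r hr w hw har.ge hbr haw.le hbw.le
    have e3 : |Γ w - Γ q| ≤ 45 * ‖w - q‖ := by
      rw [hval3 w hw haw hbw.ge, hΓ₃ q hq hbq]
      have h' : ⟪o₂, w⟫ + 1 - (⟪o₂, q⟫ + 1) = ⟪o₂, w - q⟫ := by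
        rw [inner_sub_right]; ring
      rw [h']
      have := hbnd2 (w - q)
      nlinarith [norm_nonneg (w - q)]
    have n1 : ‖p - r‖ = t * ‖p - q‖ := hn1 p q t ht0
    have nrq : ‖r - q‖ = (1 - t) * ‖p - q‖ := hn2 p q t ht1
    have n2 : ‖r - w‖ = u * ‖r - q‖ := hn1 r q u hu0
    have n3 : ‖w - q‖ = (1 - u) * ‖r - q‖ := hn2 r q u hu1
    rw [n1] at e1
    rw [n2, nrq] at e2
    rw [n3, nrq] at e3
    calc |Γ p - Γ q| ≤ |Γ p - Γ r| + |Γ r - Γ w| + |Γ w - Γ q| := by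
          have h1 := abs_sub_le (Γ p) (Γ r) (Γ q)
          have h2 := abs_sub_le (Γ r) (Γ w) (Γ q)
          linarith
      _ ≤ 45 * ‖p - q‖ := by nlinarith
  -- final case analysis over Euclidean space
  have key : ∀ p : EuclideanSpace ℝ (Fin 3), p.ofLp ∈ stdSimplex ℝ (Fin 3) →
      ∀ q : EuclideanSpace ℝ (Fin 3), q.ofLp ∈ stdSimplex ℝ (Fin 3) →
      |Γ p - Γ q| ≤ 45 * ‖p - q‖ := by
    intro p hp q hq
    rcases le_or_gt (⟪o₂, p⟫) 0 with hbp | hbp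
    · rcases le_or_gt (⟪o₂, q⟫) 0 with hbq | hbq
      · rcases le_or_gt (⟪o₁, p⟫) 0 with hap | hap
        · rcases le_or_gt (⟪o₁, q⟫) 0 with haq | haq
          · rw [hΓ₁ p hp hap, hΓ₁ q hq haq]
            have h' : ⟪o₁, p⟫ - ⟪o₁, q⟫ = ⟪o₁, p - q⟫ := by rw [inner_sub_right]
            rw [h']
            have := hbnd1 (p - q)
            nlinarith [norm_nonneg (p - q)]
          · exact cross_a p hp q hq hap hbp haq hbq
        · rcases le_or_gt (⟪o₁, q⟫) 0 with haq | haq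
          · rw [abs_sub_comm, norm_sub_rev]
            exact cross_a q hq p hp haq hbq hap hbp
          · rw [hval2 p hp hap.le hbp, hval2 q hq haq.le hbq]
            exact hratio p hp q hq hap.le hbp haq.le hbq
      · rcases le_or_gt (⟪o₁, p⟫) 0 with hap | hap
        · exact cross_ab p hp q hq hap hbp hbq
        · exact cross_b p hp q hq hap hbp hbq
    · rcases le_or_gt (⟪o₂, q⟫) 0 with hbq | hbq
      · rw [abs_sub_comm, norm_sub_rev]
        rcases le_or_gt (⟪o₁, q⟫) 0 with haq | haq
        · exact cross_ab q hq p hp haq hbq hbp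
        · exact cross_b q hq p hp haq hbq hbp
      · rw [hΓ₃ p hp hbp, hΓ₃ q hq hbq]
        have h' : ⟪o₂, p⟫ + 1 - (⟪o₂, q⟫ + 1) = ⟪o₂, p - q⟫ := by
          rw [inner_sub_right]; ring
        rw [h']
        have := hbnd2 (p - q)
        nlinarith [norm_nonneg (p - q)]
  -- bridge between the Euclidean norm and the sup norm on `Fin 3 → ℝ`
  have bridge : ∀ (u : EuclideanSpace ℝ (Fin 3)) (v : Fin 3 → ℝ), u.ofLp = v →
      ‖u‖ ≤ 2 * ‖v‖ := by
    intro u v huv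
    rw [EuclideanSpace.norm_eq, huv, Fin.sum_univ_three]
    have h0 : ‖v 0‖ ≤ ‖v‖ := norm_le_pi_norm v 0
    have h1 : ‖v 1‖ ≤ ‖v‖ := norm_le_pi_norm v 1
    have h2 : ‖v 2‖ ≤ ‖v‖ := norm_le_pi_norm v 2
    have hnn : (0:ℝ) ≤ ‖v‖ := norm_nonneg v
    have hs : Real.sqrt (‖v 0‖ ^ 2 + ‖v 1‖ ^ 2 + ‖v 2‖ ^ 2) ≤ Real.sqrt ((2 * ‖v‖) ^ 2) := by
      apply Real.sqrt_le_sqrt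
      nlinarith [norm_nonneg (v 0), norm_nonneg (v 1), norm_nonneg (v 2)]
    rwa [Real.sqrt_sq (by linarith)] at hs
  intro p hp q hq
  have h := key (WithLp.toLp 2 p) hp (WithLp.toLp 2 q) hq
  refine h.trans ?_
  have hb := bridge (WithLp.toLp 2 p - WithLp.toLp 2 q) (p - q) (by simp)
  linarith
end

section
/- Let outcomes take values in {1, 2, 3}, let Γ(p) := p₁ + 2p₂ + 3p₃ denote the mean, and let γ(p) := 1 if Γ(p) ≥ 3/2 and γ(p) := 0 otherwise, with link ψ(u) := 1 if u ≥ 3/2 and ψ(u) := 0 otherwise. For every ε with 0 < ε ≤ 3, the vector q := (3/4 − ε/4, 0, 1/4 + ε/4) lies in Δ³, Γ(q) = 3/2 + ε/2, and setting u := 3/2 − ε/2 one has |Γ(q) − u| = ε, γ(q) = 1, and ψ(u) = 0; hence the constant predictor g ≡ u is exactly ε-approximately Γ-calibrated when the conditional label marginal is q, yet ψ(g(x)) ≠ γ(q), i.e., the post-processed discrete predictor is miscalibrated with probability 1. -/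
theorem stmt15 (ε : ℝ) (hε0 : 0 < ε) (hε3 : ε ≤ 3)
    (Γ : EuclideanSpace ℝ (Fin 3) → ℝ)
    (hΓ : ∀ p, Γ p = p 0 + 2 * p 1 + 3 * p 2)
    (γ : EuclideanSpace ℝ (Fin 3) → ℕ)
    (hγ : ∀ p, γ p = if (3 : ℝ) / 2 ≤ Γ p then 1 else 0)
    (ψ : ℝ → ℕ)
    (hψ : ∀ u, ψ u = if (3 : ℝ) / 2 ≤ u then 1 else 0)
    (q : EuclideanSpace ℝ (Fin 3))
    (hq : q = ![3 / 4 - ε / 4, 0, 1 / 4 + ε / 4])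
    (u : ℝ) (hu : u = 3 / 2 - ε / 2) :
    q.ofLp ∈ stdSimplex ℝ (Fin 3) ∧
    Γ q = 3 / 2 + ε / 2 ∧
    |Γ q - u| = ε ∧
    γ q = 1 ∧
    ψ u = 0 := by
  have hΓq : Γ q = 3 / 2 + ε / 2 := by
    rw [hΓ, hq]; simp [Matrix.cons_val_zero, Matrix.cons_val_one]; ring
  refine ⟨⟨?_, ?_⟩, hΓq, ?_, ?_, ?_⟩
  · intro i
    fin_cases i <;> simp [hq] <;> linarith
  · rw [hq]
    simp [Fin.sum_univ_three]
    ring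
  · rw [hΓq, hu]
    rw [abs_of_nonneg] <;> linarith
  · rw [hγ, hΓq, if_pos (by linarith)]
  · rw [hψ, hu, if_neg (by linarith)]
end
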